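/- arXiv:2509.04364 — 3 statements merged into one kernel-verified Lean document; each statement's English description precedes it below -/
import Mathlib

section
/- Let I be an ideal of S and suppose that in_{x_n}(I) = C(x_n,I) ∩ (N(x_n,I) + (x_n)) is a nondegenerate geometric vertex decomposition. Assume g ∈ S has no term divisible by x_n and that Tr((x_n·g)^{p−1}•) is a Frobenius splitting of S that compatibly splits both C(x_n,I) and N(x_n,I). Suppose further that there exists u ∈ C(x_n,I) which lies in no associated prime of N(x_n,I) and such that u divides g. Then there exists r ∈ S with no term divisible by x_n such that Tr((x_n·g + r)^{p−1}•) is a Frobenius splitting of S that compatibly splits I. -/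
open MvPolynomial

/-- The trace map on a polynomial ring: on a monomial `m`, it returns
`(m·x_1⋯x_n)^{1/p}/(x_1⋯x_n)` if `m·x_1⋯x_n` is a `p`-th power of a monomial,
and `0` otherwise, extended `κ`-linearly. -/
noncomputable def Tr (κ : Type*) [CommSemiring κ] {σ : Type*} [Fintype σ] [DecidableEq σ]
    (p : ℕ) (f : MvPolynomial σ κ) : MvPolynomial σ κ :=
  ∑ b ∈ f.support,
    if ∀ i : σ, (b i + 1) % p = 0 then
      MvPolynomial.monomial (Finsupp.equivFunOnFinite.symm fun i => (b i + 1) / p - 1) (f.coeff b)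
    else 0

/-- A Frobenius splitting: an additive map `φ` with `φ(a^p·b) = a·φ(b)` and `φ(1) = 1`. -/
def IsFrobSplitting {R : Type*} [CommSemiring R] (p : ℕ) (φ : R → R) : Prop :=
  (∀ a b : R, φ (a + b) = φ a + φ b) ∧ (∀ a b : R, φ (a ^ p * b) = a * φ b) ∧ φ 1 = 1

/-- `φ` compatibly splits the ideal `I` if `φ(I) ⊆ I`. -/
def CompatiblySplits {R : Type*} [CommSemiring R] (φ : R → R) (I : Ideal R) : Prop :=
  ∀ a ∈ I, φ a ∈ I

/-- `f` has no term divisible by the variable `y`. -/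
def NoVar {κ : Type*} [CommSemiring κ] {σ : Type*} (y : σ) (f : MvPolynomial σ κ) : Prop :=
  ∀ b ∈ f.support, (b : σ →₀ ℕ) y = 0

/-- `in_y(f)`: the sum of the terms of `f` of highest degree in the variable `y`. -/
noncomputable def inY {κ : Type*} [CommSemiring κ] {σ : Type*} [DecidableEq σ]
    (y : σ) (f : MvPolynomial σ κ) : MvPolynomial σ κ :=
  ∑ b ∈ f.support,
    if (b : σ →₀ ℕ) y = f.degreeOf y then MvPolynomial.monomial b (f.coeff b) else 0

/-- `in_y(I)`, the ideal generated by `in_y(f)` for `f ∈ I`. -/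
noncomputable def inYIdeal {κ : Type*} [CommSemiring κ] {σ : Type*} [DecidableEq σ]
    (y : σ) (I : Ideal (MvPolynomial σ κ)) : Ideal (MvPolynomial σ κ) :=
  Ideal.span { g | ∃ f ∈ I, g = inY y f }

/-- The saturation `J : x^∞`. -/
def satPow {R : Type*} [CommRing R] (J : Ideal R) (x : R) : Ideal R where
  carrier := { f | ∃ k : ℕ, x ^ k * f ∈ J }
  zero_mem' := ⟨0, by simp⟩
  add_mem' := by
    rintro a b ⟨k, hk⟩ ⟨l, hl⟩
    refine ⟨k + l, ?_⟩
    have h := J.add_mem (J.mul_mem_left (x ^ l) hk) (J.mul_mem_left (x ^ k) hl)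
    have e : x ^ (k + l) * (a + b) = x ^ l * (x ^ k * a) + x ^ k * (x ^ l * b) := by ring
    rwa [e]
  smul_mem' := by
    rintro c a ⟨k, hk⟩
    refine ⟨k, ?_⟩
    have h := J.mul_mem_left c hk
    have e : x ^ k * (c • a) = c * (x ^ k * a) := by
      simp [smul_eq_mul]; ring
    rwa [e]

/-- `C(y,I) = in_y(I) : y^∞`. -/
noncomputable def Cyd {κ : Type*} [Field κ] {σ : Type*} [DecidableEq σ]
    (y : σ) (I : Ideal (MvPolynomial σ κ)) : Ideal (MvPolynomial σ κ) :=
  satPow (inYIdeal y I) (X y)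

/-- `N(y,I)`, the ideal generated by the elements of `I` having no term divisible by `y`. -/
noncomputable def Nyd {κ : Type*} [Field κ] {σ : Type*} (y : σ) (I : Ideal (MvPolynomial σ κ)) :
    Ideal (MvPolynomial σ κ) :=
  Ideal.span { f | f ∈ I ∧ NoVar y f }

/-- `I` admits a geometric vertex decomposition at `y`. -/
def IsGVD {κ : Type*} [Field κ] {σ : Type*} [DecidableEq σ]
    (y : σ) (I : Ideal (MvPolynomial σ κ)) : Prop :=
  inYIdeal y I = Cyd y I ⊓ (Nyd y I + Ideal.span {X y}) ∧
    ((Cyd y I).radical = (Nyd y I).radical ∨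
      ∀ P ∈ (Cyd y I).minimalPrimes, P ∉ (Nyd y I).minimalPrimes)

/-- A nondegenerate geometric vertex decomposition. -/
def IsNondegGVD {κ : Type*} [Field κ] {σ : Type*} [DecidableEq σ]
    (y : σ) (I : Ideal (MvPolynomial σ κ)) : Prop :=
  IsGVD y I ∧ Cyd y I ≠ ⊤ ∧ (Cyd y I).radical ≠ (Nyd y I).radical

/-- A degenerate geometric vertex decomposition. -/
def IsDegenGVD {κ : Type*} [Field κ] {σ : Type*} [DecidableEq σ]
    (y : σ) (I : Ideal (MvPolynomial σ κ)) : Prop :=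
  IsGVD y I ∧ (Cyd y I = ⊤ ∨ (Cyd y I).radical = (Nyd y I).radical)

/-- The ideal `N` has no embedded primes: every associated prime is minimal. -/
def NoEmbeddedPrimes {R : Type*} [CommRing R] (N : Ideal R) : Prop :=
  associatedPrimes R (R ⧸ N) ⊆ N.minimalPrimes

/-- `q` is a nonzerodivisor modulo `N`. -/
def NZDMod {R : Type*} [CommRing R] (N : Ideal R) (q : R) : Prop :=
  ∀ a : R, q * a ∈ N → a ∈ N


/-!
Write `y = x_n` and regard polynomials as polynomials in `y` over the remaining variables
(`MvPolynomial.polyEquiv`). As `u ∈ C` and `in_y(I) = C ∩ (N + (y))`, also `y u ∈ in_y(I)`,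
and `y u` lifts to some `F = y u + s ∈ I` with `s` free of `y`. Writing `g = u g'`, take
`r = g' s`, so that `y g + r = g' F`. Only the top term of `(y g + r)^(p-1)` survives the trace, so
`Tr((y g + r)^(p-1) •)` is again a splitting.

Lifting leading coefficients in the same way shows, by induction on the `y`-degree, that `I` is
generated by its elements `f = y ℓ + s_f` of `y`-degree at most one; for these `u f - ℓ F` is a
`y`-free element of `I`, hence lies in `N`. Since `u^p (g' F)^(p-1) = u g^(p-1) F^(p-1)`,
`u · Tr((g' F)^(p-1) h f) = F · Tr(g^(p-1) h ℓ) + Tr(g^(p-1) F^(p-1) h (u f - ℓ F))`, and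
`Tr(g^(p-1) •)` preserves the ideals `C` and `N` because both are saturated with respect to `y`.
This puts `u · Tr((g' F)^(p-1) a)` in `F C + N ⊆ u I + N` for every `a ∈ I`, and `u` is a
nonzerodivisor modulo `N ⊆ I`.
-/

namespace Polynomial

variable {R : Type*} [CommRing R] {J : Ideal R[X]}

theorem exists_natDegree_le_one_coeff_one_eq {z : R[X]}
    (hz : z ∈ Ideal.span {w | ∃ f ∈ J, w = C f.leadingCoeff * X ^ f.natDegree}) :
    ∃ t ∈ J, t.natDegree ≤ 1 ∧ t.coeff 1 = z.coeff 1 := by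
  -- `C (z.coeff 0) ∈ J` is carried along because it enters the coefficient of `X` in a product
  suffices (∃ t ∈ J, t.natDegree ≤ 1 ∧ t.coeff 1 = z.coeff 1) ∧ C (z.coeff 0) ∈ J from
    this.1
  induction hz using Submodule.span_induction with
  | mem w hw =>
    obtain ⟨f, hf, rfl⟩ := hw
    simp only [coeff_C_mul_X_pow]
    refine ⟨?_, ?_⟩
    · by_cases hd : f.natDegree = 1
      · exact ⟨f, hf, hd.le, by rw [if_pos hd.symm, leadingCoeff, hd]⟩
      · exact ⟨0, J.zero_mem, by simp, by simp [Ne.symm hd]⟩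
    · by_cases hd : f.natDegree = 0
      · rwa [if_pos hd.symm, leadingCoeff, hd, ← eq_C_of_natDegree_eq_zero hd]
      · simp [Ne.symm hd]
  | zero => exact ⟨⟨0, J.zero_mem, by simp, by simp⟩, by simp⟩
  | add z₁ z₂ _ _ h₁ h₂ =>
    obtain ⟨⟨t₁, ht₁, hd₁, hc₁⟩, h₁⟩ := h₁
    obtain ⟨⟨t₂, ht₂, hd₂, hc₂⟩, h₂⟩ := h₂
    refine ⟨⟨t₁ + t₂, J.add_mem ht₁ ht₂, (natDegree_add_le _ _).trans (max_le hd₁ hd₂), ?_⟩,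
      ?_⟩
    · rw [coeff_add, coeff_add, hc₁, hc₂]
    · rw [coeff_add, C_add]
      exact J.add_mem h₁ h₂
  | smul a z _ h =>
    obtain ⟨⟨t, ht, hd, hc⟩, h₀⟩ := h
    have hcoeff : (a * z).coeff 1 = a.coeff 0 * z.coeff 1 + a.coeff 1 * z.coeff 0 := by
      simp [coeff_mul, Finset.Nat.antidiagonal_succ]
    refine ⟨⟨C (a.coeff 0) * t + C (a.coeff 1 * z.coeff 0) * X, ?_, ?_, ?_⟩, ?_⟩
    · rw [C_mul]
      exact J.add_mem (J.mul_mem_left _ ht) (J.mul_mem_right _ (J.mul_mem_left _ h₀))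
    · exact (natDegree_add_le _ _).trans (max_le ((natDegree_C_mul_le _ _).trans hd)
        ((natDegree_C_mul_le _ _).trans natDegree_X_le))
    · rw [smul_eq_mul, hcoeff, coeff_add, coeff_C_mul, hc, coeff_C_mul_X, if_pos rfl]
    · rw [smul_eq_mul, mul_coeff_zero, C_mul]
      exact J.mul_mem_left _ h₀

theorem le_span_natDegree_le_one
    (h : ∀ f ∈ J, ∃ t ∈ J, t.natDegree ≤ 1 ∧ t.coeff 1 = f.leadingCoeff) :
    J ≤ Ideal.span {t | t ∈ J ∧ t.natDegree ≤ 1} := by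
  suffices ∀ d, ∀ f ∈ J, f.natDegree ≤ d + 1 →
      f ∈ Ideal.span {t | t ∈ J ∧ t.natDegree ≤ 1} from
    fun f hf => this _ f hf (Nat.le_succ _)
  intro d
  induction d with
  | zero => exact fun f hf hd => Ideal.subset_span ⟨hf, hd⟩
  | succ d ih =>
    intro f hf hd
    rcases hd.lt_or_eq with hd | hd
    · exact ih f hf (Nat.lt_succ_iff.mp hd)
    obtain ⟨t, ht, htd, htc⟩ := h f hf
    have hlow : (f - X ^ (d + 1) * t).natDegree ≤ d + 1 := by
      refine natDegree_le_iff_coeff_eq_zero.mpr fun N hN => ?_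
      rw [coeff_sub, coeff_X_pow_mul', if_pos hN.le]
      rcases (Nat.succ_le_of_lt hN).eq_or_lt with rfl | hN'
      · rw [show d + 1 + 1 - (d + 1) = 1 by omega, htc, leadingCoeff, hd, sub_self]
      · rw [coeff_eq_zero_of_natDegree_lt (by omega), coeff_eq_zero_of_natDegree_lt (by omega),
          sub_zero]
    have hmem := Ideal.add_mem _ (ih _ (J.sub_mem hf (J.mul_mem_left _ ht)) hlow)
      (Ideal.mul_mem_left _ (X ^ (d + 1)) (Ideal.subset_span ⟨ht, htd⟩))
    rwa [sub_add_cancel] at hmem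

end Polynomial

namespace MvPolynomial

section NoVar

variable {R : Type*} [CommSemiring R] {σ : Type*} {y : σ} {a b : MvPolynomial σ R}

lemma noVar_iff_degreeOf_eq_zero : NoVar y a ↔ degreeOf y a = 0 := by
  simp [NoVar, degreeOf_eq_sup]

lemma noVar_iff_mem_supported : NoVar y a ↔ a ∈ supported R ({y}ᶜ : Set σ) := by
  simp [NoVar, mem_supported, Set.subset_compl_singleton_iff, mem_vars_iff_mem_support]

lemma NoVar.mul (ha : NoVar y a) (hb : NoVar y b) : NoVar y (a * b) :=
  noVar_iff_mem_supported.mpr <|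
    Subalgebra.mul_mem _ (noVar_iff_mem_supported.mp ha) (noVar_iff_mem_supported.mp hb)

lemma NoVar.of_mul [NoZeroDivisors R] (hab : NoVar y (a * b)) (h0 : a * b ≠ 0) :
    NoVar y a ∧ NoVar y b := by
  simp only [noVar_iff_degreeOf_eq_zero] at hab ⊢
  rw [degreeOf_mul_eq (left_ne_zero_of_mul h0) (right_ne_zero_of_mul h0)] at hab
  omega

lemma degreeOf_X_mul_pow_mul_le [Nontrivial R] (ha : NoVar y a) (hb : NoVar y b) (m k c : ℕ) :
    degreeOf y ((X y * a) ^ m * b ^ k * (c : MvPolynomial σ R)) ≤ m := by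
  rw [noVar_iff_degreeOf_eq_zero] at ha hb
  calc _ ≤ degreeOf y ((X y * a) ^ m) + degreeOf y (b ^ k) + degreeOf y (c : MvPolynomial σ R) :=
        (degreeOf_mul_le _ _ _).trans (Nat.add_le_add_right (degreeOf_mul_le _ _ _) _)
    _ ≤ m * (degreeOf y (X y) + degreeOf y a) + k * degreeOf y b + 0 := by
        gcongr
        · exact (degreeOf_pow_le _ _ _).trans (Nat.mul_le_mul_left _ (degreeOf_mul_le _ _ _))
        · exact degreeOf_pow_le _ _ _
        · rw [← map_natCast C, degreeOf_C]
    _ = m := by simp [ha, hb]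

end NoVar

lemma NoVar.sub {R : Type*} [CommRing R] {σ : Type*} {y : σ} {a b : MvPolynomial σ R}
    (ha : NoVar y a) (hb : NoVar y b) : NoVar y (a - b) :=
  noVar_iff_mem_supported.mpr <|
    Subalgebra.sub_mem _ (noVar_iff_mem_supported.mp ha) (noVar_iff_mem_supported.mp hb)

variable (R : Type*) [CommSemiring R] {σ : Type*} [DecidableEq σ]

noncomputable def polyEquiv (y : σ) :
    MvPolynomial σ R ≃ₐ[R] Polynomial (MvPolynomial {b // b ≠ y} R) :=
  (renameEquiv R (Equiv.optionSubtypeNe y).symm).trans (optionEquivLeft R _)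

variable {R} (y : σ)

@[simp]
lemma polyEquiv_X_self : polyEquiv R y (X y) = Polynomial.X := by
  simp [polyEquiv, Equiv.optionSubtypeNe_symm_apply]

@[simp]
lemma polyEquiv_symm_X : (polyEquiv R y).symm Polynomial.X = X y := by
  rw [AlgEquiv.symm_apply_eq, polyEquiv_X_self]

@[simp]
lemma natDegree_polyEquiv (f : MvPolynomial σ R) : (polyEquiv R y f).natDegree = degreeOf y f :=
  (degreeOf_eq_natDegree y f).symm

lemma coeff_coeff_polyEquiv (f : MvPolynomial σ R) (e : ℕ) (m : {b // b ≠ y} →₀ ℕ) :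
    coeff m ((polyEquiv R y f).coeff e) =
      coeff ((m.optionElim e).mapDomain (Equiv.optionSubtypeNe y)) f := by
  rw [polyEquiv, AlgEquiv.trans_apply, optionEquivLeft_coeff_coeff, renameEquiv_apply,
    ← coeff_rename_mapDomain _ (Equiv.optionSubtypeNe y).symm.injective,
    ← Finsupp.mapDomain_comp, Equiv.symm_comp_self, Finsupp.mapDomain_id]

variable {y}

lemma polyEquiv_eq_C_of_noVar {f : MvPolynomial σ R} (hf : NoVar y f) :
    polyEquiv R y f = Polynomial.C ((polyEquiv R y f).coeff 0) :=
  Polynomial.eq_C_of_natDegree_eq_zero <| by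
    rw [natDegree_polyEquiv, ← noVar_iff_degreeOf_eq_zero]
    exact hf

lemma noVar_polyEquiv_symm_C (q : MvPolynomial {b // b ≠ y} R) :
    NoVar y ((polyEquiv R y).symm (Polynomial.C q)) := by
  rw [noVar_iff_degreeOf_eq_zero, ← natDegree_polyEquiv, AlgEquiv.apply_symm_apply,
    Polynomial.natDegree_C]

lemma polyEquiv_symm_eq_X_mul_add {t : Polynomial (MvPolynomial {b // b ≠ y} R)}
    (ht : t.natDegree ≤ 1) :
    (polyEquiv R y).symm t = X y * (polyEquiv R y).symm (Polynomial.C (t.coeff 1)) +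
      (polyEquiv R y).symm (Polynomial.C (t.coeff 0)) := by
  conv_lhs => rw [Polynomial.eq_X_add_C_of_natDegree_le_one ht]
  rw [map_add, map_mul, polyEquiv_symm_X, mul_comm]

lemma coeff_inY (f : MvPolynomial σ R) (b : σ →₀ ℕ) :
    coeff b (inY y f) = if b y = degreeOf y f then coeff b f else 0 := by
  rw [inY, coeff_sum, Finset.sum_eq_single b]
  · simp [apply_ite (coeff b)]
  · intro b' _ hne
    simp [apply_ite (coeff b), coeff_monomial, hne]
  · intro hb
    simp [notMem_support_iff.mp hb]

lemma polyEquiv_inY (f : MvPolynomial σ R) :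
    polyEquiv R y (inY y f) =
      Polynomial.C (polyEquiv R y f).leadingCoeff * Polynomial.X ^ degreeOf y f := by
  ext e m
  have hy : (m.optionElim e).mapDomain (Equiv.optionSubtypeNe y) y = e := by simp
  rw [coeff_coeff_polyEquiv, coeff_inY, hy, Polynomial.coeff_C_mul_X_pow,
    Polynomial.leadingCoeff, natDegree_polyEquiv]
  split_ifs with h
  · rw [h, coeff_coeff_polyEquiv]
  · rfl

lemma inY_eq_X_pow_mul (f : MvPolynomial σ R) :
    inY y f = X y ^ degreeOf y f *
      (polyEquiv R y).symm (Polynomial.C (polyEquiv R y f).leadingCoeff) := by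
  apply (polyEquiv R y).injective
  rw [polyEquiv_inY, map_mul, map_pow, polyEquiv_X_self, AlgEquiv.apply_symm_apply, mul_comm]

lemma polyEquiv_mem_map_iff {K : Ideal (MvPolynomial σ R)} {f : MvPolynomial σ R} :
    polyEquiv R y f ∈ K.map (polyEquiv R y) ↔ f ∈ K := by
  rw [Ideal.mem_map_of_equiv]
  exact ⟨fun ⟨x, hx, he⟩ => (polyEquiv R y).injective he ▸ hx, fun h => ⟨f, h, rfl⟩⟩

lemma mem_of_X_mul_mem_span_noVar {E : Set (MvPolynomial σ R)} (hE : ∀ e ∈ E, NoVar y e)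
    {t : MvPolynomial σ R} (h : X y * t ∈ Ideal.span E) : t ∈ Ideal.span E := by
  have hmap : (Ideal.span E).map (polyEquiv R y) =
      (Ideal.span ((fun e => (polyEquiv R y e).coeff 0) '' E)).map Polynomial.C := by
    rw [Ideal.map_span, Ideal.map_span, Set.image_image]
    exact congrArg _ (Set.image_congr fun e he => polyEquiv_eq_C_of_noVar (hE e he))
  rw [← polyEquiv_mem_map_iff (y := y), hmap, Ideal.mem_map_C_iff] at h ⊢
  intro n
  simpa [Polynomial.coeff_X_mul] using h (n + 1)

end MvPolynomial

section Trace

variable {κ : Type*} [CommSemiring κ] {σ : Type*} [Fintype σ] {p : ℕ}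

variable (κ p) in
noncomputable def trTerm (b : σ →₀ ℕ) : κ →ₗ[κ] MvPolynomial σ κ :=
  if ∀ i, (b i + 1) % p = 0 then
    monomial (Finsupp.equivFunOnFinite.symm fun i => (b i + 1) / p - 1) else 0

lemma trTerm_single_add (hp : 0 < p) (i : σ) (b : σ →₀ ℕ) (c : κ) :
    trTerm κ p (Finsupp.single i p + b) c = X i * trTerm κ p b c := by
  have hmod : ∀ j, ((Finsupp.single i p + b) j + 1) % p = (b j + 1) % p := by
    intro j
    rcases eq_or_ne j i with rfl | hj
    · simp [add_assoc]
    · simp [Finsupp.single_eq_of_ne hj]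
  simp only [trTerm, hmod]
  split_ifs with h
  · rw [X, monomial_mul, one_mul]
    refine congrArg (fun e => monomial e c) (Finsupp.ext fun j => ?_)
    rcases eq_or_ne j i with rfl | hj
    · have hq := Nat.div_add_mod (b j + 1) p
      have hpos : (b j + 1) / p ≠ 0 := fun h0 => by rw [h j, h0] at hq; omega
      simp only [Finsupp.coe_add, Pi.add_apply, Finsupp.single_eq_same,
        Finsupp.equivFunOnFinite_symm_apply_apply, add_assoc, Nat.add_div_left _ hp]
      generalize (b j + 1) / p = q at hpos ⊢
      omega
    · simp [Finsupp.single_eq_of_ne hj]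
  · simp

variable [DecidableEq σ]

lemma Tr_eq_sum_of_support_subset {f : MvPolynomial σ κ} {B : Finset (σ →₀ ℕ)}
    (hB : f.support ⊆ B) : Tr κ p f = ∑ b ∈ B, trTerm κ p b (coeff b f) := by
  rw [← Finset.sum_subset hB fun b _ hb => by rw [notMem_support_iff.mp hb, map_zero]]
  refine Finset.sum_congr rfl fun b _ => ?_
  simp only [trTerm]
  split_ifs <;> rfl

lemma Tr_zero : Tr κ p (0 : MvPolynomial σ κ) = 0 := by
  simp [Tr]

lemma Tr_add (f g : MvPolynomial σ κ) : Tr κ p (f + g) = Tr κ p f + Tr κ p g := by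
  rw [Tr_eq_sum_of_support_subset support_add,
    Tr_eq_sum_of_support_subset (f := f) Finset.subset_union_left,
    Tr_eq_sum_of_support_subset (f := g) Finset.subset_union_right, ← Finset.sum_add_distrib]
  simp only [coeff_add, map_add]

lemma Tr_sum {ι : Type*} (s : Finset ι) (f : ι → MvPolynomial σ κ) :
    Tr κ p (∑ i ∈ s, f i) = ∑ i ∈ s, Tr κ p (f i) :=
  map_sum (⟨⟨Tr κ p, Tr_zero⟩, Tr_add⟩ : MvPolynomial σ κ →+ MvPolynomial σ κ) f s

lemma Tr_monomial (b : σ →₀ ℕ) (c : κ) : Tr κ p (monomial b c) = trTerm κ p b c := by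
  rw [Tr_eq_sum_of_support_subset support_monomial_subset, Finset.sum_singleton, coeff_monomial,
    if_pos rfl]

lemma Tr_C_mul (c : κ) (f : MvPolynomial σ κ) : Tr κ p (C c * f) = C c * Tr κ p f := by
  rw [← smul_eq_C_mul, ← smul_eq_C_mul, Tr_eq_sum_of_support_subset support_smul,
    Tr_eq_sum_of_support_subset subset_rfl, Finset.smul_sum]
  simp only [coeff_smul, map_smul]

lemma Tr_X_pow_mul (hp : 0 < p) (i : σ) (f : MvPolynomial σ κ) :
    Tr κ p (X i ^ p * f) = X i * Tr κ p f := by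
  induction f using MvPolynomial.induction_on' with
  | monomial b c =>
    rw [X_pow_eq_monomial, monomial_mul, one_mul, Tr_monomial, Tr_monomial,
      trTerm_single_add hp]
  | add f g hf hg => rw [mul_add, Tr_add, Tr_add, hf, hg, mul_add]

lemma Tr_eq_zero_of_degreeOf_lt {y : σ} {f : MvPolynomial σ κ} (hf : degreeOf y f + 1 < p) :
    Tr κ p f = 0 := by
  refine Finset.sum_eq_zero fun b hb => if_neg fun hdiv => ?_
  have hle := monomial_le_degreeOf y hb
  have := hdiv y
  rw [Nat.mod_eq_of_lt (by omega)] at this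
  omega

lemma Tr_X_mul_add_pow_sub_one [Nontrivial κ] {y : σ} {g r : MvPolynomial σ κ}
    (hg : NoVar y g) (hr : NoVar y r) :
    Tr κ p ((X y * g + r) ^ (p - 1)) = Tr κ p ((X y * g) ^ (p - 1)) := by
  rw [add_pow, Finset.sum_range_succ, Tr_add, Tr_sum, Finset.sum_eq_zero, zero_add]
  · simp
  · intro m hm
    have hm' : m < p - 1 := Finset.mem_range.mp hm
    have := degreeOf_X_mul_pow_mul_le hg hr m (p - 1 - m) ((p - 1).choose m)
    exact Tr_eq_zero_of_degreeOf_lt (y := y) (by omega)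

-- `Tr` is `κ`-linear rather than `p⁻¹`-linear, so a splitting of this form can only exist when
-- the Frobenius of `κ` is the identity.
lemma pow_eq_self_of_isFrobSplitting {h : MvPolynomial σ κ}
    (hφ : IsFrobSplitting p fun a => Tr κ p (h * a)) (c : κ) : c ^ p = c := by
  obtain ⟨-, hsemi, hone⟩ := hφ
  have key := hsemi (C c) 1
  simp only [mul_one, ← C_pow, mul_comm h (C _), Tr_C_mul] at key hone
  rw [hone, mul_one, mul_one] at key
  exact C_injective σ κ key

variable [Fact p.Prime] [CharP κ p]

lemma Tr_pow_mul (hκ : ∀ c : κ, c ^ p = c) (f g : MvPolynomial σ κ) :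
    Tr κ p (f ^ p * g) = f * Tr κ p g := by
  induction f using MvPolynomial.induction_on generalizing g with
  | C a => rw [← C_pow, hκ, Tr_C_mul]
  | add f₁ f₂ h₁ h₂ => rw [add_pow_char, add_mul, Tr_add, h₁, h₂, add_mul]
  | mul_X f i ih =>
    rw [mul_pow, mul_assoc, ih, Tr_X_pow_mul (Fact.out : p.Prime).pos, mul_assoc]

lemma isFrobSplitting_Tr_mul_iff (hκ : ∀ c : κ, c ^ p = c) {h : MvPolynomial σ κ} :
    IsFrobSplitting p (fun a => Tr κ p (h * a)) ↔ Tr κ p h = 1 := by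
  refine ⟨fun hφ => by simpa using hφ.2.2, fun h1 => ⟨fun a b => ?_, fun a b => ?_, ?_⟩⟩
  · dsimp only
    rw [mul_add, Tr_add]
  · dsimp only
    rw [mul_left_comm, Tr_pow_mul hκ]
  · dsimp only
    rwa [mul_one]

end Trace

lemma Ideal.mem_of_mul_mem_of_forall_notMem_associatedPrimes {R : Type*} [CommRing R]
    [IsNoetherianRing R] {N : Ideal R} {u t : R}
    (hu : ∀ P ∈ associatedPrimes R (R ⧸ N), u ∉ P) (h : u * t ∈ N) : t ∈ N := by
  by_contra ht
  have hzd : u ∈ ⋃ P ∈ associatedPrimes R (R ⧸ N), (P : Set R) := by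
    rw [biUnion_associatedPrimes_eq_zero_divisors]
    exact ⟨Ideal.Quotient.mk N t, by rwa [Ne, Ideal.Quotient.eq_zero_iff_mem], by
      rwa [Algebra.smul_def, Ideal.Quotient.algebraMap_eq, ← map_mul,
        Ideal.Quotient.eq_zero_iff_mem]⟩
  obtain ⟨P, hP, huP⟩ := Set.mem_iUnion₂.mp hzd
  exact hu P hP huP

lemma Ideal.mem_of_mul_mem_span_singleton_mul_sup {R : Type*} [CommRing R] {I N : Ideal R}
    {u t : R} (hu : ∀ a, u * a ∈ N → a ∈ N) (hNI : N ≤ I)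
    (h : u * t ∈ Ideal.span {u} * I ⊔ N) : t ∈ I := by
  obtain ⟨_, hθ, n, hn, heq⟩ := Submodule.mem_sup.mp h
  obtain ⟨θ, hθI, rfl⟩ := Ideal.mem_span_singleton_mul.mp hθ
  have hdiff : u * (t - θ) ∈ N := by
    rw [mul_sub, ← heq]
    simpa using hn
  simpa using I.add_mem (hNI (hu _ hdiff)) hθI

section GVD

variable {κ : Type*} [Field κ] {σ : Type*} {y : σ} {I : Ideal (MvPolynomial σ κ)}

lemma Nyd_le : Nyd y I ≤ I :=
  Ideal.span_le.mpr fun _ hf => hf.1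

lemma mem_Nyd {f : MvPolynomial σ κ} (hf : f ∈ I) (hfy : NoVar y f) : f ∈ Nyd y I :=
  Ideal.subset_span ⟨hf, hfy⟩

lemma mul_sub_mul_mem_Nyd {ℓ₁ s₁ ℓ₂ s₂ : MvPolynomial σ κ} (hℓ₁ : NoVar y ℓ₁)
    (hs₁ : NoVar y s₁) (hℓ₂ : NoVar y ℓ₂) (hs₂ : NoVar y s₂)
    (h₁ : X y * ℓ₁ + s₁ ∈ I) (h₂ : X y * ℓ₂ + s₂ ∈ I) :
    ℓ₂ * (X y * ℓ₁ + s₁) - ℓ₁ * (X y * ℓ₂ + s₂) ∈ Nyd y I := by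
  refine mem_Nyd (I.sub_mem (I.mul_mem_left _ h₁) (I.mul_mem_left _ h₂)) ?_
  have hfree : ℓ₂ * (X y * ℓ₁ + s₁) - ℓ₁ * (X y * ℓ₂ + s₂) = ℓ₂ * s₁ - ℓ₁ * s₂ := by ring
  rw [hfree]
  exact (hℓ₂.mul hs₁).sub (hℓ₁.mul hs₂)

variable [DecidableEq σ]

lemma mem_Cyd_of_X_pow_mul_mem {k : ℕ} {t : MvPolynomial σ κ} (h : X y ^ k * t ∈ Cyd y I) :
    t ∈ Cyd y I := by
  obtain ⟨j, hj⟩ := h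
  exact ⟨j + k, by rwa [pow_add, mul_assoc]⟩

lemma inYIdeal_le_Cyd : inYIdeal y I ≤ Cyd y I :=
  fun _ hf => ⟨0, by rwa [pow_zero, one_mul]⟩

lemma polyEquiv_symm_leadingCoeff_mem_Cyd {f : MvPolynomial σ κ} (hf : f ∈ I) :
    (polyEquiv κ y).symm (Polynomial.C (polyEquiv κ y f).leadingCoeff) ∈ Cyd y I := by
  refine mem_Cyd_of_X_pow_mul_mem (k := degreeOf y f) ?_
  rw [← inY_eq_X_pow_mul]
  exact inYIdeal_le_Cyd (Ideal.subset_span ⟨f, hf, rfl⟩)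

lemma mem_Cyd_of_X_mul_add_mem {ℓ s : MvPolynomial σ κ} (hℓ : NoVar y ℓ) (hs : NoVar y s)
    (h : X y * ℓ + s ∈ I) : ℓ ∈ Cyd y I := by
  rcases eq_or_ne ℓ 0 with rfl | hℓ0
  · exact Ideal.zero_mem _
  have hpoly : polyEquiv κ y (X y * ℓ + s) =
      Polynomial.C ((polyEquiv κ y ℓ).coeff 0) * Polynomial.X +
        Polynomial.C ((polyEquiv κ y s).coeff 0) := by
    rw [map_add, map_mul, polyEquiv_X_self, polyEquiv_eq_C_of_noVar hℓ,
      polyEquiv_eq_C_of_noVar hs, Polynomial.coeff_C_zero, Polynomial.coeff_C_zero, mul_comm]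
  have hℓ0' : (polyEquiv κ y ℓ).coeff 0 ≠ 0 := fun h0 =>
    hℓ0 <| (polyEquiv κ y).injective <| by
      rw [polyEquiv_eq_C_of_noVar hℓ, h0, map_zero, map_zero]
  have := polyEquiv_symm_leadingCoeff_mem_Cyd (y := y) h
  rwa [hpoly, Polynomial.leadingCoeff_linear hℓ0', ← polyEquiv_eq_C_of_noVar hℓ,
    AlgEquiv.symm_apply_apply] at this

lemma Cyd_le_span_noVar : Cyd y I ≤ Ideal.span {c | c ∈ Cyd y I ∧ NoVar y c} := by
  have hin : inYIdeal y I ≤ Ideal.span {c | c ∈ Cyd y I ∧ NoVar y c} := by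
    refine Ideal.span_le.mpr ?_
    rintro _ ⟨f, hf, rfl⟩
    rw [inY_eq_X_pow_mul]
    exact Ideal.mul_mem_left _ _
      (Ideal.subset_span ⟨polyEquiv_symm_leadingCoeff_mem_Cyd hf, noVar_polyEquiv_symm_C _⟩)
  rintro t ⟨k, hk⟩
  induction k generalizing t with
  | zero => simpa using hin hk
  | succ k ih =>
    exact mem_of_X_mul_mem_span_noVar (fun _ he => he.2)
      (ih (by rwa [← mul_assoc, ← pow_succ]))

lemma mem_Nyd_of_X_mul_mem {t : MvPolynomial σ κ} (h : X y * t ∈ Nyd y I) : t ∈ Nyd y I :=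
  mem_of_X_mul_mem_span_noVar (fun _ he => he.2) h

lemma exists_natDegree_le_one_coeff_one_eq_of_mem_Cyd
    (hGVD : inYIdeal y I = Cyd y I ⊓ (Nyd y I + Ideal.span {X y})) {c : MvPolynomial σ κ}
    (hc : c ∈ Cyd y I) :
    ∃ t ∈ I.map (polyEquiv κ y), t.natDegree ≤ 1 ∧ t.coeff 1 = (polyEquiv κ y c).coeff 0 := by
  have hXc : X y * c ∈ inYIdeal y I := by
    rw [hGVD]
    exact Submodule.mem_inf.mpr ⟨Ideal.mul_mem_left _ _ hc,
      Submodule.mem_sup_right (Ideal.mem_span_singleton'.mpr ⟨c, mul_comm _ _⟩)⟩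
  have hlead : (inYIdeal y I).map (polyEquiv κ y) ≤ Ideal.span {w | ∃ f ∈ I.map (polyEquiv κ y),
      w = Polynomial.C f.leadingCoeff * Polynomial.X ^ f.natDegree} := by
    rw [inYIdeal, Ideal.map_span]
    refine Ideal.span_mono ?_
    rintro _ ⟨_, ⟨f, hf, rfl⟩, rfl⟩
    exact ⟨_, Ideal.mem_map_of_mem _ hf, by rw [polyEquiv_inY, natDegree_polyEquiv]⟩
  obtain ⟨t, ht, htd, htc⟩ :=
    Polynomial.exists_natDegree_le_one_coeff_one_eq (hlead (Ideal.mem_map_of_mem _ hXc))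
  refine ⟨t, ht, htd, ?_⟩
  rw [htc, map_mul, polyEquiv_X_self]
  exact Polynomial.coeff_X_mul (n := 0) (p := polyEquiv κ y c)

lemma exists_X_mul_add_mem (hGVD : inYIdeal y I = Cyd y I ⊓ (Nyd y I + Ideal.span {X y}))
    {c : MvPolynomial σ κ} (hc : c ∈ Cyd y I) (hcy : NoVar y c) :
    ∃ s, NoVar y s ∧ X y * c + s ∈ I := by
  obtain ⟨t, ht, htd, htc⟩ := exists_natDegree_le_one_coeff_one_eq_of_mem_Cyd hGVD hc
  obtain ⟨f, hf, rfl⟩ := (Ideal.mem_map_of_equiv _ t).mp ht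
  refine ⟨_, noVar_polyEquiv_symm_C ((polyEquiv κ y f).coeff 0), ?_⟩
  have hfe := polyEquiv_symm_eq_X_mul_add htd
  rw [AlgEquiv.symm_apply_apply, htc, ← polyEquiv_eq_C_of_noVar hcy,
    AlgEquiv.symm_apply_apply] at hfe
  rwa [← hfe]

lemma le_span_X_mul_add (hGVD : inYIdeal y I = Cyd y I ⊓ (Nyd y I + Ideal.span {X y})) :
    I ≤ Ideal.span {f | f ∈ I ∧ ∃ ℓ s, NoVar y ℓ ∧ NoVar y s ∧ f = X y * ℓ + s} := by
  have hJ := Polynomial.le_span_natDegree_le_one (J := I.map (polyEquiv κ y)) fun t ht => by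
    obtain ⟨f, hf, rfl⟩ := (Ideal.mem_map_of_equiv _ t).mp ht
    simpa using exists_natDegree_le_one_coeff_one_eq_of_mem_Cyd hGVD
      (polyEquiv_symm_leadingCoeff_mem_Cyd hf)
  intro f hf
  have hmap := Ideal.mem_map_of_mem (polyEquiv κ y).symm (hJ (Ideal.mem_map_of_mem _ hf))
  rw [AlgEquiv.symm_apply_apply, Ideal.map_span] at hmap
  refine Ideal.span_mono ?_ hmap
  rintro _ ⟨t, ⟨ht, htd⟩, rfl⟩
  refine ⟨?_, _, _, noVar_polyEquiv_symm_C _, noVar_polyEquiv_symm_C _,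
    polyEquiv_symm_eq_X_mul_add htd⟩
  obtain ⟨f, hf, rfl⟩ := (Ideal.mem_map_of_equiv _ t).mp ht
  rwa [AlgEquiv.symm_apply_apply]

lemma X_mul_add_mul_mem_of_mem_Cyd
    (hGVD : inYIdeal y I = Cyd y I ⊓ (Nyd y I + Ideal.span {X y})) {u s : MvPolynomial σ κ}
    (hu : NoVar y u) (hs : NoVar y s) (hF : X y * u + s ∈ I) {c : MvPolynomial σ κ}
    (hc : c ∈ Cyd y I) :
    (X y * u + s) * c ∈ Ideal.span {u} * I ⊔ Nyd y I := by
  have hc' := Cyd_le_span_noVar hc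
  clear hc
  induction hc' using Submodule.span_induction with
  | mem c hc =>
    obtain ⟨hcC, hcy⟩ := hc
    obtain ⟨s', hs', hG⟩ := exists_X_mul_add_mem hGVD hcC hcy
    have hw := mul_sub_mul_mem_Nyd hcy hs' hu hs hG hF
    rw [show (X y * u + s) * c = u * (X y * c + s') -
        (u * (X y * c + s') - c * (X y * u + s)) by ring]
    exact Ideal.sub_mem _ (Submodule.mem_sup_left (Ideal.mul_mem_mul
      (Ideal.mem_span_singleton_self u) hG)) (Submodule.mem_sup_right hw)
  | zero => simp
  | add a b _ _ ha hb => rw [mul_add]; exact Ideal.add_mem _ ha hb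
  | smul a b _ hb => rw [smul_eq_mul, mul_left_comm]; exact Ideal.mul_mem_left _ _ hb

end GVD

section Compatibility

variable {p : ℕ} [Fact p.Prime] {κ : Type*} [Field κ] [CharP κ p] {σ : Type*} [Fintype σ]
  [DecidableEq σ] {y : σ} {I : Ideal (MvPolynomial σ κ)} {g : MvPolynomial σ κ}

lemma Tr_pow_sub_one_mul_mem (hκ : ∀ c : κ, c ^ p = c) {J : Ideal (MvPolynomial σ κ)}
    (hsat : ∀ t, X y * t ∈ J → t ∈ J)
    (hJ : CompatiblySplits (fun a => Tr κ p ((X y * g) ^ (p - 1) * a)) J) {a : MvPolynomial σ κ}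
    (ha : a ∈ J) : Tr κ p (g ^ (p - 1) * a) ∈ J := by
  refine hsat _ ?_
  rw [← Tr_pow_mul hκ]
  convert hJ _ (J.mul_mem_left (X y) ha) using 2
  rw [← pow_sub_one_mul (Fact.out : p.Prime).ne_zero]
  ring

variable {u s : MvPolynomial σ κ}

lemma Tr_mul_X_mul_add_mem (hκ : ∀ c : κ, c ^ p = c)
    (hGVD : inYIdeal y I = Cyd y I ⊓ (Nyd y I + Ideal.span {X y}))
    (hC : CompatiblySplits (fun a => Tr κ p ((X y * g) ^ (p - 1) * a)) (Cyd y I))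
    (hN : CompatiblySplits (fun a => Tr κ p ((X y * g) ^ (p - 1) * a)) (Nyd y I))
    (hu : NoVar y u) (hs : NoVar y s) (hF : X y * u + s ∈ I) {ℓ s' : MvPolynomial σ κ}
    (hℓ : NoVar y ℓ) (hs' : NoVar y s') (hf : X y * ℓ + s' ∈ I) (h : MvPolynomial σ κ) :
    Tr κ p (g ^ (p - 1) * (X y * u + s) ^ (p - 1) * (u * (h * (X y * ℓ + s')))) ∈
      Ideal.span {u} * I ⊔ Nyd y I := by
  set F := X y * u + s
  set w := u * (X y * ℓ + s') - ℓ * F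
  have hw : w ∈ Nyd y I := mul_sub_mul_mem_Nyd hℓ hs' hu hs hf hF
  have hexpand : g ^ (p - 1) * F ^ (p - 1) * (u * (h * (X y * ℓ + s'))) =
      F ^ p * (g ^ (p - 1) * (h * ℓ)) + g ^ (p - 1) * (F ^ (p - 1) * h * w) := by
    rw [← pow_sub_one_mul (Fact.out : p.Prime).ne_zero]
    ring
  rw [hexpand, Tr_add, Tr_pow_mul hκ]
  refine Ideal.add_mem _ (X_mul_add_mul_mem_of_mem_Cyd hGVD hu hs hF ?_)
    (Submodule.mem_sup_right ?_)
  · have hsat (t : MvPolynomial σ κ) (ht : X y * t ∈ Cyd y I) : t ∈ Cyd y I :=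
      mem_Cyd_of_X_pow_mul_mem (k := 1) (by rwa [pow_one])
    exact Tr_pow_sub_one_mul_mem hκ hsat hC
      (Ideal.mul_mem_left _ _ (mem_Cyd_of_X_mul_add_mem hℓ hs' hf))
  · exact Tr_pow_sub_one_mul_mem hκ (fun _ => mem_Nyd_of_X_mul_mem) hN (Ideal.mul_mem_left _ _ hw)

lemma Tr_mul_mem_of_mem (hκ : ∀ c : κ, c ^ p = c)
    (hGVD : inYIdeal y I = Cyd y I ⊓ (Nyd y I + Ideal.span {X y}))
    (hC : CompatiblySplits (fun a => Tr κ p ((X y * g) ^ (p - 1) * a)) (Cyd y I))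
    (hN : CompatiblySplits (fun a => Tr κ p ((X y * g) ^ (p - 1) * a)) (Nyd y I))
    (hu : NoVar y u) (hs : NoVar y s) (hF : X y * u + s ∈ I) {a : MvPolynomial σ κ}
    (ha : a ∈ I) :
    Tr κ p (g ^ (p - 1) * (X y * u + s) ^ (p - 1) * (u * a)) ∈
      Ideal.span {u} * I ⊔ Nyd y I := by
  suffices ∀ h, Tr κ p (g ^ (p - 1) * (X y * u + s) ^ (p - 1) * (u * (h * a))) ∈
      Ideal.span {u} * I ⊔ Nyd y I by simpa using this 1
  have ha' := le_span_X_mul_add hGVD ha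
  clear ha
  induction ha' using Submodule.span_induction with
  | mem f hf =>
    obtain ⟨hfI, ℓ, s', hℓ, hs', rfl⟩ := hf
    exact Tr_mul_X_mul_add_mem hκ hGVD hC hN hu hs hF hℓ hs' hfI
  | zero => simp [Tr_zero]
  | add a b _ _ ha hb =>
    intro h
    rw [mul_add, mul_add, mul_add, Tr_add]
    exact Ideal.add_mem _ (ha h) (hb h)
  | smul c a _ ha => intro h; simpa only [smul_eq_mul, mul_assoc] using ha (h * c)

theorem compatiblySplits_Tr_mul_X_mul_add (hκ : ∀ c : κ, c ^ p = c)
    (hGVD : inYIdeal y I = Cyd y I ⊓ (Nyd y I + Ideal.span {X y})) {g' : MvPolynomial σ κ}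
    (hC : CompatiblySplits (fun a => Tr κ p ((X y * (u * g')) ^ (p - 1) * a)) (Cyd y I))
    (hN : CompatiblySplits (fun a => Tr κ p ((X y * (u * g')) ^ (p - 1) * a)) (Nyd y I))
    (huN : ∀ P ∈ associatedPrimes (MvPolynomial σ κ) (MvPolynomial σ κ ⧸ Nyd y I),
      u ∉ P)
    (hu : NoVar y u) (hs : NoVar y s) (hF : X y * u + s ∈ I) :
    CompatiblySplits (fun a => Tr κ p ((g' * (X y * u + s)) ^ (p - 1) * a)) I := by
  intro a ha
  refine Ideal.mem_of_mul_mem_span_singleton_mul_sup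
    (fun _ => Ideal.mem_of_mul_mem_of_forall_notMem_associatedPrimes huN) Nyd_le ?_
  rw [← Tr_pow_mul hκ]
  convert Tr_mul_mem_of_mem hκ hGVD hC hN hu hs hF ha using 2
  rw [mul_pow, mul_pow, ← pow_sub_one_mul (Fact.out : p.Prime).ne_zero]
  ring

end Compatibility

theorem main_theorem_general {p : ℕ} [Fact p.Prime] {κ : Type*} [Field κ] [CharP κ p]
    {n : ℕ} (I : Ideal (MvPolynomial (Fin (n + 1)) κ))
    (g : MvPolynomial (Fin (n + 1)) κ)
    (hgvd : IsNondegGVD (Fin.last n) I)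
    (hg : NoVar (Fin.last n) g)
    (hsplit : IsFrobSplitting p
      (fun a => Tr κ p ((X (Fin.last n) * g) ^ (p - 1) * a)))
    (hC : CompatiblySplits (fun a => Tr κ p ((X (Fin.last n) * g) ^ (p - 1) * a))
      (Cyd (Fin.last n) I))
    (hN : CompatiblySplits (fun a => Tr κ p ((X (Fin.last n) * g) ^ (p - 1) * a))
      (Nyd (Fin.last n) I))
    (hu : ∃ u ∈ Cyd (Fin.last n) I,
      (∀ P ∈ associatedPrimes (MvPolynomial (Fin (n + 1)) κ)
        (MvPolynomial (Fin (n + 1)) κ ⧸ Nyd (Fin.last n) I), u ∉ P) ∧ u ∣ g) :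
    ∃ r : MvPolynomial (Fin (n + 1)) κ, NoVar (Fin.last n) r ∧
      IsFrobSplitting p (fun a => Tr κ p ((X (Fin.last n) * g + r) ^ (p - 1) * a)) ∧
      CompatiblySplits (fun a => Tr κ p ((X (Fin.last n) * g + r) ^ (p - 1) * a)) I := by
  obtain ⟨u, huC, huN, g', rfl⟩ := hu
  have hκ := pow_eq_self_of_isFrobSplitting hsplit
  have hTr := (isFrobSplitting_Tr_mul_iff hκ).mp hsplit
  have hg0 : u * g' ≠ 0 := by
    rintro h0
    rw [h0, mul_zero, zero_pow (Nat.sub_ne_zero_of_lt (Fact.out : p.Prime).one_lt), Tr_zero] at hTr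
    exact zero_ne_one hTr
  obtain ⟨hu, hg'⟩ := hg.of_mul hg0
  obtain ⟨s, hs, hF⟩ := exists_X_mul_add_mem hgvd.1.1 huC hu
  refine ⟨g' * s, hg'.mul hs, ?_, ?_⟩
  · rw [isFrobSplitting_Tr_mul_iff hκ, Tr_X_mul_add_pow_sub_one hg (hg'.mul hs), hTr]
  · rw [show X (Fin.last n) * (u * g') + g' * s = g' * (X (Fin.last n) * u + s) by ring]
    exact compatiblySplits_Tr_mul_X_mul_add hκ hgvd.1.1 hC hN huN hu hs hF

/-- **Main Theorem.** If `in_{x_n}(I) = C ∩ (N + (x_n))` is a nondegenerate geometric vertex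
decomposition, `g` has no term divisible by `x_n`, `Tr((x_n g)^{p-1} •)` is a Frobenius
splitting compatibly splitting both `C(x_n,I)` and `N(x_n,I)`, and some `u ∈ C(x_n,I)`
lying in no associated prime of `N(x_n,I)` divides `g`, then there is `r` with no term
divisible by `x_n` such that `Tr((x_n g + r)^{p-1} •)` is a Frobenius splitting that
compatibly splits `I`. -/
theorem main_theorem {p : ℕ} [Fact p.Prime] {κ : Type*} [Field κ] [CharP κ p] [PerfectRing κ p]
    {n : ℕ} (I : Ideal (MvPolynomial (Fin (n + 1)) κ))
    (g : MvPolynomial (Fin (n + 1)) κ)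
    (hgvd : IsNondegGVD (Fin.last n) I)
    (hg : NoVar (Fin.last n) g)
    (hsplit : IsFrobSplitting p
      (fun a => Tr κ p ((X (Fin.last n) * g) ^ (p - 1) * a)))
    (hC : CompatiblySplits (fun a => Tr κ p ((X (Fin.last n) * g) ^ (p - 1) * a))
      (Cyd (Fin.last n) I))
    (hN : CompatiblySplits (fun a => Tr κ p ((X (Fin.last n) * g) ^ (p - 1) * a))
      (Nyd (Fin.last n) I))
    (hu : ∃ u ∈ Cyd (Fin.last n) I,
      (∀ P ∈ associatedPrimes (MvPolynomial (Fin (n + 1)) κ)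
        (MvPolynomial (Fin (n + 1)) κ ⧸ Nyd (Fin.last n) I), u ∉ P) ∧ u ∣ g) :
    ∃ r : MvPolynomial (Fin (n + 1)) κ, NoVar (Fin.last n) r ∧
      IsFrobSplitting p (fun a => Tr κ p ((X (Fin.last n) * g + r) ^ (p - 1) * a)) ∧
      CompatiblySplits (fun a => Tr κ p ((X (Fin.last n) * g + r) ^ (p - 1) * a)) I :=
  main_theorem_general I g hgvd hg hsplit hC hN hu
end

section
/- Let I be an ideal of S such that in_{x_n}(I) = C(x_n,I) ∩ (N(x_n,I) + (x_n)) is a nondegenerate geometric vertex decomposition and suppose N(x_n,I) has no embedded primes. Then for each u ∈ C(x_n,I) with no term divisible by x_n, there exists s ∈ S with no term divisible by x_n such that x_n·u + s ∈ I. -/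
open MvPolynomial

/-! Grade `MvPolynomial σ R` by the degree in `y`. The GVD equality puts `y * u` into `in_y(I)`,
so `y * u`, being its own degree-one component, is the degree-one component of a combination
`∑ cᵢ * in_y(fᵢ)` with `fᵢ ∈ I`. A summand with `deg_y fᵢ ≥ 2` has no degree-one part; otherwise
its degree-one part is that of `fᵢ * eᵢ ∈ I`, where `eᵢ` is the component of `cᵢ` of degree
`1 - deg_y fᵢ`. As `fᵢ * eᵢ` has `y`-degree at most one, it differs from its degree-one part by a
polynomial with no term divisible by `y`. -/

namespace MvPolynomial

section Grading

variable {R σ M : Type*} [CommSemiring R] [AddCommMonoid M] [DecidableEq M]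
  {w : σ → M} {φ ψ : MvPolynomial σ R} {i n : M}

attribute [local instance] weightedGradedAlgebra

theorem weightedHomogeneousComponent_eq_decompose (w : σ → M) (n : M) (φ : MvPolynomial σ R) :
    weightedHomogeneousComponent w n φ =
      (DirectSum.decompose (weightedHomogeneousSubmodule R w) φ n : MvPolynomial σ R) :=
  (weightedDecomposition.decompose'_apply R w φ n).symm

variable [PartialOrder M] [CanonicallyOrderedAdd M]

theorem IsWeightedHomogeneous.weightedHomogeneousComponent_mul_of_not_le
    (hφ : φ.IsWeightedHomogeneous w i) (h : ¬i ≤ n) :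
    weightedHomogeneousComponent w n (ψ * φ) = 0 := by
  rw [weightedHomogeneousComponent_eq_decompose]
  exact DirectSum.coe_decompose_mul_of_right_mem_of_not_le _ hφ h

variable [Sub M] [OrderedSub M] [AddLeftReflectLE M]

theorem IsWeightedHomogeneous.weightedHomogeneousComponent_mul_of_le
    (hφ : φ.IsWeightedHomogeneous w i) (h : i ≤ n) :
    weightedHomogeneousComponent w n (ψ * φ) = weightedHomogeneousComponent w (n - i) ψ * φ := by
  rw [weightedHomogeneousComponent_eq_decompose, weightedHomogeneousComponent_eq_decompose]
  exact DirectSum.coe_decompose_mul_of_right_mem_of_le _ hφ h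

end Grading

end MvPolynomial

open MvPolynomial

section VertexDecomposition

variable {R σ : Type*} [CommRing R] [DecidableEq σ] {y : σ} {I : Ideal (MvPolynomial σ R)}

theorem noVar_iff_isWeightedHomogeneous {f : MvPolynomial σ R} :
    NoVar y f ↔ f.IsWeightedHomogeneous (Pi.single y 1) 0 := by
  simp only [NoVar, IsWeightedHomogeneous, Finsupp.weight_single_one_apply, mem_support_iff]

theorem inY_eq_weightedHomogeneousComponent (y : σ) (f : MvPolynomial σ R) :
    inY y f = weightedHomogeneousComponent (Pi.single y 1) (degreeOf y f) f := by
  rw [inY, weightedHomogeneousComponent_apply, Finset.sum_filter]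
  simp only [Finsupp.weight_single_one_apply]

theorem degreeOf_le_of_isWeightedHomogeneous {f : MvPolynomial σ R} {k : ℕ}
    (hf : f.IsWeightedHomogeneous (Pi.single y 1) k) : degreeOf y f ≤ k :=
  degreeOf_le_iff.mpr fun b hb => by
    rw [← hf (mem_support_iff.mp hb), Finsupp.weight_single_one_apply]

theorem weightedHomogeneousComponent_zero_add_one_of_degreeOf_le_one {f : MvPolynomial σ R}
    (hf : degreeOf y f ≤ 1) :
    weightedHomogeneousComponent (Pi.single y 1) 0 f +
      weightedHomogeneousComponent (Pi.single y 1) 1 f = f := by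
  ext b
  simp only [coeff_add, coeff_weightedHomogeneousComponent, Finsupp.weight_single_one_apply]
  by_cases h : coeff b f = 0
  · simp [h]
  · rcases Nat.le_one_iff_eq_zero_or_eq_one.mp
      (degreeOf_le_iff.mp hf b (mem_support_iff.mpr h)) with hb | hb <;> simp [hb]

theorem weightedHomogeneousComponent_one_mem_of_degreeOf_le_one {g : MvPolynomial σ R}
    (hg : g ∈ I) (hdeg : degreeOf y g ≤ 1) :
    weightedHomogeneousComponent (Pi.single y 1) 1 g ∈
      I.restrictScalars R ⊔ weightedHomogeneousSubmodule R (Pi.single y 1) 0 := by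
  rw [eq_sub_of_add_eq' (weightedHomogeneousComponent_zero_add_one_of_degreeOf_le_one hdeg),
    sub_eq_add_neg]
  exact Submodule.add_mem_sup hg (neg_mem (weightedHomogeneousComponent_mem _ _ _))

theorem weightedHomogeneousComponent_one_mul_inY_mem {f : MvPolynomial σ R} (hf : f ∈ I)
    (c : MvPolynomial σ R) :
    weightedHomogeneousComponent (Pi.single y 1) 1 (c * inY y f) ∈
      I.restrictScalars R ⊔ weightedHomogeneousSubmodule R (Pi.single y 1) 0 := by
  set d := degreeOf y f
  have hin : (inY y f).IsWeightedHomogeneous (Pi.single y 1) d := by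
    rw [inY_eq_weightedHomogeneousComponent]
    exact weightedHomogeneousComponent_isWeightedHomogeneous _ _
  by_cases hd : d ≤ 1
  · set e := weightedHomogeneousComponent (Pi.single y 1) (1 - d) c
    have he : e.IsWeightedHomogeneous (Pi.single y 1) (1 - d) :=
      weightedHomogeneousComponent_isWeightedHomogeneous _ _
    have hcomp : weightedHomogeneousComponent (Pi.single y 1) 1 (c * inY y f) =
        weightedHomogeneousComponent (Pi.single y 1) 1 (f * e) := by
      rw [hin.weightedHomogeneousComponent_mul_of_le hd,
        he.weightedHomogeneousComponent_mul_of_le (Nat.sub_le 1 d), Nat.sub_sub_self hd,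
        inY_eq_weightedHomogeneousComponent, mul_comm]
    rw [hcomp]
    refine weightedHomogeneousComponent_one_mem_of_degreeOf_le_one (I.mul_mem_right e hf) ?_
    calc degreeOf y (f * e) ≤ degreeOf y f + degreeOf y e := degreeOf_mul_le _ _ _
      _ ≤ d + (1 - d) := add_le_add le_rfl (degreeOf_le_of_isWeightedHomogeneous he)
      _ = 1 := by omega
  · rw [hin.weightedHomogeneousComponent_mul_of_not_le hd]
    exact zero_mem _

theorem weightedHomogeneousComponent_one_mem_of_mem_inYIdeal {g : MvPolynomial σ R}
    (hg : g ∈ inYIdeal y I) :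
    weightedHomogeneousComponent (Pi.single y 1) 1 g ∈
      I.restrictScalars R ⊔ weightedHomogeneousSubmodule R (Pi.single y 1) 0 := by
  suffices ∀ c, weightedHomogeneousComponent (Pi.single y 1) 1 (c * g) ∈
      I.restrictScalars R ⊔ weightedHomogeneousSubmodule R (Pi.single y 1) 0 by
    simpa using this 1
  induction hg using Submodule.span_induction with
  | mem _ hgen =>
    obtain ⟨f, hf, rfl⟩ := hgen
    exact weightedHomogeneousComponent_one_mul_inY_mem hf
  | zero => simp
  | add a b _ _ ha hb =>
    intro c
    rw [mul_add, map_add]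
    exact add_mem (ha c) (hb c)
  | smul a b _ hb =>
    intro c
    rw [smul_eq_mul, ← mul_assoc]
    exact hb _

theorem exists_noVar_add_mem_of_X_mul_mem_inYIdeal {u : MvPolynomial σ R} (hu : NoVar y u)
    (h : X y * u ∈ inYIdeal y I) : ∃ s, NoVar y s ∧ X y * u + s ∈ I := by
  have hXu : (X y * u).IsWeightedHomogeneous (Pi.single y 1) 1 := by
    simpa using (isWeightedHomogeneous_X R (Pi.single y 1) y).mul
      (noVar_iff_isWeightedHomogeneous.mp hu)
  obtain ⟨a, ha, z, hz, haz⟩ :=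
    Submodule.mem_sup.mp (weightedHomogeneousComponent_one_mem_of_mem_inYIdeal h)
  rw [weightedHomogeneousComponent_eq_self hXu] at haz
  refine ⟨-z, noVar_iff_isWeightedHomogeneous.mpr (neg_mem hz), ?_⟩
  rwa [← haz, add_neg_cancel_right]

end VertexDecomposition

theorem IsGVD.X_mul_mem_inYIdeal {κ σ : Type*} [Field κ] [DecidableEq σ] {y : σ}
    {I : Ideal (MvPolynomial σ κ)} (h : IsGVD y I) {u : MvPolynomial σ κ} (hu : u ∈ Cyd y I) :
    X y * u ∈ inYIdeal y I := by
  rw [h.1]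
  exact ⟨Ideal.mul_mem_left _ _ hu,
    Submodule.mem_sup_right (Ideal.mul_mem_right _ _ (Ideal.mem_span_singleton_self _))⟩

theorem gvd_part4_general {κ : Type*} [Field κ] {n : ℕ} (I : Ideal (MvPolynomial (Fin (n + 1)) κ))
    (hgvd : IsNondegGVD (Fin.last n) I) :
    ∀ u ∈ Cyd (Fin.last n) I, NoVar (Fin.last n) u →
      ∃ s : MvPolynomial (Fin (n + 1)) κ, NoVar (Fin.last n) s ∧
        X (Fin.last n) * u + s ∈ I :=
  fun _ hu hnov => exists_noVar_add_mem_of_X_mul_mem_inYIdeal hnov (hgvd.1.X_mul_mem_inYIdeal hu)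

/-- Part (4): for each `u ∈ C(x_n,I)` with no term divisible by `x_n`, there is `s`
with no term divisible by `x_n` such that `x_n·u + s ∈ I`. -/
theorem gvd_part4 {p : ℕ} [Fact p.Prime] {κ : Type*} [Field κ] [CharP κ p] [PerfectRing κ p]
    {n : ℕ} (I : Ideal (MvPolynomial (Fin (n + 1)) κ))
    (hgvd : IsNondegGVD (Fin.last n) I)
    (hemb : NoEmbeddedPrimes (Nyd (Fin.last n) I)) :
    ∀ u ∈ Cyd (Fin.last n) I, NoVar (Fin.last n) u →
      ∃ s : MvPolynomial (Fin (n + 1)) κ, NoVar (Fin.last n) s ∧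
        X (Fin.last n) * u + s ∈ I :=
  gvd_part4_general I hgvd
end

section
/- Let I be an ideal of S such that in_{x_n}(I) = C(x_n,I) ∩ (N(x_n,I) + (x_n)) is a nondegenerate geometric vertex decomposition and suppose N(x_n,I) has no embedded primes. Let q ∈ C(x_n,I) and r ∈ S have no term divisible by x_n with x_n·q + r ∈ I, and let u ∈ C(x_n,I) and s ∈ S have no term divisible by x_n with x_n·u + s ∈ I. Then u·r − s·q ∈ N(x_n,I); equivalently, (x_n·u + s)·q − u·(x_n·q + r) ∈ N(x_n,I). -/
open MvPolynomial

namespace NoVar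

variable {κ σ : Type*} {y : σ}

lemma mul [CommSemiring κ] {f g : MvPolynomial σ κ} (hf : NoVar y f) (hg : NoVar y g) :
    NoVar y (f * g) := by
  classical
  intro b hb
  obtain ⟨b₁, hb₁, b₂, hb₂, rfl⟩ := Finset.mem_add.mp (support_mul f g hb)
  simp [hf b₁ hb₁, hg b₂ hb₂]

lemma sub [CommRing κ] {f g : MvPolynomial σ κ} (hf : NoVar y f) (hg : NoVar y g) :
    NoVar y (f - g) := by
  classical
  intro b hb
  rcases Finset.mem_union.mp (support_sub σ f g hb) with h | h
  · exact hf b h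
  · exact hg b h

end NoVar

lemma mem_Nyd_of_mem_of_noVar {κ σ : Type*} [Field κ] {y : σ} {I : Ideal (MvPolynomial σ κ)}
    {f : MvPolynomial σ κ} (hfI : f ∈ I) (hf : NoVar y f) : f ∈ Nyd y I :=
  Ideal.subset_span ⟨hfI, hf⟩

lemma cross_mem_Nyd {κ σ : Type*} [Field κ] {y : σ} {I : Ideal (MvPolynomial σ κ)}
    {q r u s : MvPolynomial σ κ} (hq : NoVar y q) (hr : NoVar y r) (hu : NoVar y u)
    (hs : NoVar y s) (hqrI : X y * q + r ∈ I) (husI : X y * u + s ∈ I) :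
    u * r - s * q ∈ Nyd y I := by
  have hI : u * r - s * q ∈ I := by
    rw [show u * r - s * q = u * (X y * q + r) - q * (X y * u + s) by ring]
    exact I.sub_mem (I.mul_mem_left u hqrI) (I.mul_mem_left q husI)
  exact mem_Nyd_of_mem_of_noVar hI ((hu.mul hr).sub (hs.mul hq))

theorem gvd_cross_relation_general {κ : Type*} [Field κ]
    {n : ℕ} (I : Ideal (MvPolynomial (Fin (n + 1)) κ))
    (q r u s : MvPolynomial (Fin (n + 1)) κ)
    (hq : NoVar (Fin.last n) q) (hr : NoVar (Fin.last n) r)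
    (hqrI : X (Fin.last n) * q + r ∈ I)
    (hu : NoVar (Fin.last n) u) (hs : NoVar (Fin.last n) s)
    (husI : X (Fin.last n) * u + s ∈ I) :
    u * r - s * q ∈ Nyd (Fin.last n) I ∧
    (X (Fin.last n) * u + s) * q - u * (X (Fin.last n) * q + r) ∈ Nyd (Fin.last n) I := by
  have hcross := cross_mem_Nyd (I := I) hq hr hu hs hqrI husI
  refine ⟨hcross, ?_⟩
  rw [show (X (Fin.last n) * u + s) * q - u * (X (Fin.last n) * q + r) = -(u * r - s * q) by ring]
  exact neg_mem hcross

/-- If `x_n·q + r ∈ I` and `x_n·u + s ∈ I` with `q, u ∈ C(x_n,I)` and no term of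
`q, r, u, s` divisible by `x_n`, then `u·r − s·q ∈ N(x_n,I)`; equivalently,
`(x_n·u + s)·q − u·(x_n·q + r) ∈ N(x_n,I)`. -/
theorem gvd_cross_relation {p : ℕ} [Fact p.Prime] {κ : Type*} [Field κ] [CharP κ p]
    [PerfectRing κ p]
    {n : ℕ} (I : Ideal (MvPolynomial (Fin (n + 1)) κ))
    (hgvd : IsNondegGVD (Fin.last n) I)
    (hemb : NoEmbeddedPrimes (Nyd (Fin.last n) I))
    (q r u s : MvPolynomial (Fin (n + 1)) κ)
    (hqC : q ∈ Cyd (Fin.last n) I)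
    (hq : NoVar (Fin.last n) q) (hr : NoVar (Fin.last n) r)
    (hqrI : X (Fin.last n) * q + r ∈ I)
    (huC : u ∈ Cyd (Fin.last n) I)
    (hu : NoVar (Fin.last n) u) (hs : NoVar (Fin.last n) s)
    (husI : X (Fin.last n) * u + s ∈ I) :
    u * r - s * q ∈ Nyd (Fin.last n) I ∧
    (X (Fin.last n) * u + s) * q - u * (X (Fin.last n) * q + r) ∈ Nyd (Fin.last n) I :=
  gvd_cross_relation_general I q r u s hq hr hqrI hu hs husI
end
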